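/- arXiv:1601.00042 — 2 statements merged into one kernel-verified Lean document; each statement's English description precedes it below -/
import Mathlib

section
/- Let T > 0 be such that Φ_v(T) is invertible, and let x₀, x_f, δx₀, δx_f ∈ ℝ⁶. Then the fixed-duration two-impulse steering cost between the perturbed endpoints satisfies J_T(x₀ + δx₀, x_f + δx_f) ≤ J_T(x₀, x_f) + √2·‖Φ_v(T)⁻¹‖·(‖δx_f‖ + ‖exp(T·A)‖·‖δx₀‖), where the matrix norms are operator norms. -/
/-! The steering solution `ΔV = Φ_v⁻¹ (x_f - e^{TA} x₀)` is linear in the pair of endpoints, so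
perturbing the endpoints adds the steering solution of the perturbations, and the cost
`‖ΔV₁‖ + ‖ΔV₂‖` is subadditive. The cost of the perturbation is at most `√2 ‖ΔV‖` (Cauchy–Schwarz
on the two burns), and `‖ΔV‖ ≤ ‖Φ_v⁻¹‖ (‖δx_f‖ + ‖e^{TA}‖ ‖δx₀‖)`. -/

noncomputable section

def euclNorm {m : ℕ} (v : Fin m → ℝ) : ℝ := Real.sqrt (∑ i, v i ^ 2)

def cwhA (ω : ℝ) : Matrix (Fin 6) (Fin 6) ℝ :=
  !![0, 0, 0, 1, 0, 0;
     0, 0, 0, 0, 1, 0;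
     0, 0, 0, 0, 0, 1;
     3*ω^2, 0, 0, 0, 2*ω, 0;
     0, 0, 0, -2*ω, 0, 0;
     0, 0, -ω^2, 0, 0, 0]

/-- The CWH input matrix `B = [0; I₃]`. -/
def cwhB : Matrix (Fin 6) (Fin 3) ℝ :=
  !![0, 0, 0;
     0, 0, 0;
     0, 0, 0;
     1, 0, 0;
     0, 1, 0;
     0, 0, 1]

/-- State transition matrix `exp(t A)`. -/
def expm (ω t : ℝ) : Matrix (Fin 6) (Fin 6) ℝ := NormedSpace.exp (t • cwhA ω)

def blockCat (M N : Matrix (Fin 6) (Fin 3) ℝ) : Matrix (Fin 6) (Fin 6) ℝ :=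
  Matrix.of fun i j => if h : (j : ℕ) < 3 then M i ⟨j, h⟩ else N i ⟨(j : ℕ) - 3, by omega⟩

/-- The aggregated impulse matrix `Φ_v(T) = [exp(T A) B  B]`. -/
def Phiv (ω T : ℝ) : Matrix (Fin 6) (Fin 6) ℝ := blockCat (expm ω T * cwhB) cwhB

/-- The two-impulse Gramian `G(T) = Φ_v(T) Φ_v(T)ᵀ`. -/
def gram (ω T : ℝ) : Matrix (Fin 6) (Fin 6) ℝ := Phiv ω T * (Phiv ω T).transpose

def first3 (v : Fin 6 → ℝ) : Fin 3 → ℝ := fun i => v ⟨(i : ℕ), by omega⟩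

def last3 (v : Fin 6 → ℝ) : Fin 3 → ℝ := fun i => v ⟨(i : ℕ) + 3, by omega⟩

def dVsteer (ω T : ℝ) (x₀ xf : Fin 6 → ℝ) : Fin 6 → ℝ :=
  (Phiv ω T)⁻¹.mulVec (xf - (expm ω T).mulVec x₀)

/-- The fixed-duration two-impulse steering cost `J_T(x₀, x_f)`. -/
def Jfix (ω T : ℝ) (x₀ xf : Fin 6 → ℝ) : ℝ :=
  euclNorm (first3 (dVsteer ω T x₀ xf)) + euclNorm (last3 (dVsteer ω T x₀ xf))

/-- Euclidean operator norm of a `6 × 6` real matrix. -/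
def opNorm (M : Matrix (Fin 6) (Fin 6) ℝ) : ℝ :=
  ‖(Matrix.toEuclideanCLM (𝕜 := ℝ) M : EuclideanSpace ℝ (Fin 6) →L[ℝ] EuclideanSpace ℝ (Fin 6))‖

open scoped Matrix

lemma euclNorm_eq_norm {m : ℕ} (v : Fin m → ℝ) : euclNorm v = ‖WithLp.toLp 2 v‖ := by
  simp only [euclNorm, EuclideanSpace.norm_eq, Real.norm_eq_abs, sq_abs]

lemma euclNorm_nonneg {m : ℕ} (v : Fin m → ℝ) : 0 ≤ euclNorm v := Real.sqrt_nonneg _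

lemma euclNorm_add_le {m : ℕ} (v w : Fin m → ℝ) : euclNorm (v + w) ≤ euclNorm v + euclNorm w := by
  simpa only [euclNorm_eq_norm, WithLp.toLp_add] using norm_add_le _ _

lemma euclNorm_sub_le {m : ℕ} (v w : Fin m → ℝ) : euclNorm (v - w) ≤ euclNorm v + euclNorm w := by
  simpa only [euclNorm_eq_norm, WithLp.toLp_sub] using norm_sub_le _ _

lemma euclNorm_mulVec_le (M : Matrix (Fin 6) (Fin 6) ℝ) (v : Fin 6 → ℝ) :
    euclNorm (M *ᵥ v) ≤ opNorm M * euclNorm v := by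
  simpa only [opNorm, euclNorm_eq_norm, Matrix.toEuclideanCLM_toLp] using
    (Matrix.toEuclideanCLM (𝕜 := ℝ) M).le_opNorm (WithLp.toLp 2 v)

lemma euclNorm_sq_eq_first3_add_last3 (v : Fin 6 → ℝ) :
    euclNorm v ^ 2 = euclNorm (first3 v) ^ 2 + euclNorm (last3 v) ^ 2 := by
  simp only [euclNorm]
  rw [Real.sq_sqrt (by positivity), Real.sq_sqrt (by positivity), Real.sq_sqrt (by positivity)]
  simp only [Fin.sum_univ_six, Fin.isValue, first3, Fin.sum_univ_three, Fin.coe_ofNat_eq_mod,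
    Nat.zero_mod, Fin.zero_eta, Nat.one_mod, Fin.mk_one, Nat.mod_succ, Fin.reduceFinMk, last3,
    zero_add, Nat.reduceAdd]
  ring

lemma add_le_sqrt_two_mul_sqrt_sq_add_sq (a b : ℝ) : a + b ≤ √2 * √(a ^ 2 + b ^ 2) := by
  rw [← Real.sqrt_mul zero_le_two]
  exact Real.le_sqrt_of_sq_le add_sq_le

def burnCost (v : Fin 6 → ℝ) : ℝ := euclNorm (first3 v) + euclNorm (last3 v)

lemma burnCost_add_le (v w : Fin 6 → ℝ) : burnCost (v + w) ≤ burnCost v + burnCost w := by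
  have h₁ := euclNorm_add_le (first3 v) (first3 w)
  have h₂ := euclNorm_add_le (last3 v) (last3 w)
  unfold burnCost
  exact (add_le_add h₁ h₂).trans_eq (add_add_add_comm _ _ _ _)

lemma burnCost_le_sqrt_two_mul_euclNorm (v : Fin 6 → ℝ) : burnCost v ≤ √2 * euclNorm v := by
  have h := add_le_sqrt_two_mul_sqrt_sq_add_sq (euclNorm (first3 v)) (euclNorm (last3 v))
  rwa [← euclNorm_sq_eq_first3_add_last3, Real.sqrt_sq (euclNorm_nonneg v)] at h

lemma Jfix_eq_burnCost (ω T : ℝ) (x₀ xf : Fin 6 → ℝ) :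
    Jfix ω T x₀ xf = burnCost (dVsteer ω T x₀ xf) := rfl

lemma dVsteer_add (ω T : ℝ) (x₀ xf δx₀ δxf : Fin 6 → ℝ) :
    dVsteer ω T (x₀ + δx₀) (xf + δxf) = dVsteer ω T x₀ xf + dVsteer ω T δx₀ δxf := by
  rw [dVsteer, dVsteer, dVsteer, ← Matrix.mulVec_add, Matrix.mulVec_add]
  congr 1
  abel

lemma Jfix_add_le (ω T : ℝ) (x₀ xf δx₀ δxf : Fin 6 → ℝ) :
    Jfix ω T (x₀ + δx₀) (xf + δxf) ≤ Jfix ω T x₀ xf + Jfix ω T δx₀ δxf := by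
  simpa only [Jfix_eq_burnCost, dVsteer_add] using burnCost_add_le _ _

lemma Jfix_le (ω T : ℝ) (x₀ xf : Fin 6 → ℝ) :
    Jfix ω T x₀ xf ≤
      √2 * opNorm (Phiv ω T)⁻¹ * (euclNorm xf + opNorm (expm ω T) * euclNorm x₀) := by
  have hΦ := euclNorm_mulVec_le (Phiv ω T)⁻¹ (xf - expm ω T *ᵥ x₀)
  have hdiff : euclNorm (xf - expm ω T *ᵥ x₀) ≤ euclNorm xf + opNorm (expm ω T) * euclNorm x₀ :=
    (euclNorm_sub_le _ _).trans (add_le_add_right (euclNorm_mulVec_le _ _) _)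
  calc Jfix ω T x₀ xf ≤ √2 * euclNorm (dVsteer ω T x₀ xf) :=
        (Jfix_eq_burnCost ω T x₀ xf).trans_le (burnCost_le_sqrt_two_mul_euclNorm _)
    _ ≤ √2 * (opNorm (Phiv ω T)⁻¹ * (euclNorm xf + opNorm (expm ω T) * euclNorm x₀)) := by
        gcongr
        exact hΦ.trans (mul_le_mul_of_nonneg_left hdiff (norm_nonneg _))
    _ = _ := (mul_assoc _ _ _).symm

theorem perturbed_steering_cost_bound_general (ω : ℝ) (T : ℝ) (x₀ xf δx₀ δxf : Fin 6 → ℝ) :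
    Jfix ω T (x₀ + δx₀) (xf + δxf) ≤
      Jfix ω T x₀ xf +
        Real.sqrt 2 * opNorm (Phiv ω T)⁻¹ *
          (euclNorm δxf + opNorm (expm ω T) * euclNorm δx₀) :=
  (Jfix_add_le ω T x₀ xf δx₀ δxf).trans (add_le_add_right (Jfix_le ω T δx₀ δxf) _)

/-- **Steering with perturbed endpoints (positive duration), quantitative form.**
If `Φ_v(T)` is invertible, then
`J_T(x₀ + δx₀, x_f + δx_f) ≤ J_T(x₀, x_f) + √2 ‖Φ_v(T)⁻¹‖ (‖δx_f‖ + ‖exp(T A)‖ ‖δx₀‖)`. -/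
theorem perturbed_steering_cost_bound (ω : ℝ) (hω : 0 < ω) (T : ℝ) (hT : 0 < T)
    (hinv : IsUnit (Phiv ω T)) (x₀ xf δx₀ δxf : Fin 6 → ℝ) :
    Jfix ω T (x₀ + δx₀) (xf + δxf) ≤
      Jfix ω T x₀ xf +
        Real.sqrt 2 * opNorm (Phiv ω T)⁻¹ *
          (euclNorm δxf + opNorm (expm ω T) * euclNorm δx₀) :=
  perturbed_steering_cost_bound_general ω T x₀ xf δx₀ δxf

end
end

section
/- Let ρ > 0 and define the safe circularized-orbit set X_inv = {x ∈ ℝ⁶ : |x₁| ≥ ρ, x₄ = 0, x₅ = −(3/2)·ω·x₁}, i.e. states with zero radial velocity, in-track velocity equal to −(3/2)ω times the radial position, and radial position outside the band of half-width ρ. Then X_inv is positively invariant under the uncontrolled CWH flow: for every x ∈ X_inv and every t ≥ 0, exp(t·A)·x ∈ X_inv. Moreover the radial coordinate is constant along the flow: (exp(t·A)·x)₁ = x₁ for all t ≥ 0. -/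
noncomputable section

/-
On circularized states (`δẋ = 0`, `δẏ = -(3/2) ω δx`) the CWH generator `A` only produces
in-track and out-of-plane motion: it maps them into the subspace `W` of states with
`δx = δẋ = δẏ = 0`, and `W` is `A`-invariant. Hence every term `(tA)^k x / k!`, `k ≥ 1`, of the
exponential series lies in the closed subspace `W`, so `exp(tA) x - x ∈ W`: the flow leaves
`δx`, `δẋ` and `δẏ` unchanged.
-/

open Matrix

theorem Matrix.exp_mulVec_sub_mem {𝕂 n : Type*} [RCLike 𝕂] [Fintype n] [DecidableEq n]
    {M : Matrix n n 𝕂} {W : Submodule 𝕂 (n → 𝕂)} (hW : ∀ w ∈ W, M *ᵥ w ∈ W) {x : n → 𝕂}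
    (hx : M *ᵥ x ∈ W) : NormedSpace.exp M *ᵥ x - x ∈ W := by
  have hpow : ∀ k, M ^ (k + 1) *ᵥ x ∈ W := by
    intro k
    induction k with
    | zero => simpa using hx
    | succ k ih => rw [pow_succ', ← mulVec_mulVec]; exact hW _ ih
  let C := W.comap ((mulVecBilin 𝕂 𝕂).flip x)
  have hC : IsClosed (C : Set (Matrix n n 𝕂)) :=
    W.closed_of_finiteDimensional.preimage (continuous_id.matrix_mulVec continuous_const)
  -- Summability does not depend on the norm, so any submultiplicative one on matrices will do.
  have hsum : Summable fun k => (k.factorial : 𝕂)⁻¹ • M ^ k := by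
    open scoped Norms.Operator in exact NormedSpace.expSeries_summable' M
  have hexp : NormedSpace.exp M - 1 ∈ C := by
    simp only [NormedSpace.exp_eq_tsum 𝕂, hsum.tsum_eq_zero_add, Nat.factorial_zero, Nat.cast_one,
      inv_one, pow_zero, one_smul, add_sub_cancel_left]
    exact tsum_mem hC fun k => C.smul_mem _ (hpow k)
  simpa [C, sub_mulVec] using hexp

def cwhDriftSubspace : Submodule ℝ (Fin 6 → ℝ) where
  carrier := {w | w 0 = 0 ∧ w 3 = 0 ∧ w 4 = 0}
  add_mem' := by
    rintro v w ⟨hv0, hv3, hv4⟩ ⟨hw0, hw3, hw4⟩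
    simp [hv0, hv3, hv4, hw0, hw3, hw4]
  zero_mem' := by simp
  smul_mem' := by
    rintro c w ⟨hw0, hw3, hw4⟩
    simp [hw0, hw3, hw4]

@[simp]
theorem mem_cwhDriftSubspace {w : Fin 6 → ℝ} :
    w ∈ cwhDriftSubspace ↔ w 0 = 0 ∧ w 3 = 0 ∧ w 4 = 0 :=
  Iff.rfl

theorem cwhA_mulVec_apply_zero (ω : ℝ) (v : Fin 6 → ℝ) : (cwhA ω *ᵥ v) 0 = v 3 := by
  simp [cwhA, mulVec, dotProduct, Fin.sum_univ_succ]

theorem cwhA_mulVec_apply_three (ω : ℝ) (v : Fin 6 → ℝ) :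
    (cwhA ω *ᵥ v) 3 = 3 * ω ^ 2 * v 0 + 2 * ω * v 4 := by
  simp [cwhA, mulVec, dotProduct, Fin.sum_univ_succ]

theorem cwhA_mulVec_apply_four (ω : ℝ) (v : Fin 6 → ℝ) : (cwhA ω *ᵥ v) 4 = -2 * ω * v 3 := by
  simp [cwhA, mulVec, dotProduct, Fin.sum_univ_succ]

theorem cwhA_mulVec_mem_cwhDriftSubspace (ω : ℝ) {w : Fin 6 → ℝ} (hw : w ∈ cwhDriftSubspace) :
    cwhA ω *ᵥ w ∈ cwhDriftSubspace := by
  obtain ⟨h0, h3, h4⟩ := hw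
  simp [cwhA_mulVec_apply_zero, cwhA_mulVec_apply_three, cwhA_mulVec_apply_four, h0, h3, h4]

theorem cwhA_mulVec_mem_cwhDriftSubspace_of_circular (ω : ℝ) {x : Fin 6 → ℝ} (h3 : x 3 = 0)
    (h4 : x 4 = -(3 / 2) * ω * x 0) : cwhA ω *ᵥ x ∈ cwhDriftSubspace := by
  refine ⟨cwhA_mulVec_apply_zero ω x ▸ h3, ?_, by simp [cwhA_mulVec_apply_four, h3]⟩
  rw [cwhA_mulVec_apply_three, h4]
  ring

theorem expm_mulVec_sub_mem_cwhDriftSubspace (ω t : ℝ) {x : Fin 6 → ℝ} (h3 : x 3 = 0)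
    (h4 : x 4 = -(3 / 2) * ω * x 0) : expm ω t *ᵥ x - x ∈ cwhDriftSubspace := by
  refine Matrix.exp_mulVec_sub_mem (fun w hw => ?_) ?_ <;> rw [smul_mulVec]
  · exact cwhDriftSubspace.smul_mem t (cwhA_mulVec_mem_cwhDriftSubspace ω hw)
  · exact cwhDriftSubspace.smul_mem t (cwhA_mulVec_mem_cwhDriftSubspace_of_circular ω h3 h4)

theorem safe_circular_orbits_positively_invariant_general (ω : ℝ) (ρ : ℝ) :
    ∀ x : Fin 6 → ℝ,
      x ∈ {x : Fin 6 → ℝ | ρ ≤ |x 0| ∧ x 3 = 0 ∧ x 4 = -(3 / 2) * ω * x 0} →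
      ∀ t : ℝ, 0 ≤ t →
        (expm ω t).mulVec x ∈
          {x : Fin 6 → ℝ | ρ ≤ |x 0| ∧ x 3 = 0 ∧ x 4 = -(3 / 2) * ω * x 0} ∧
        ((expm ω t).mulVec x) 0 = x 0 := by
  rintro x ⟨hρx, h3, h4⟩ t -
  obtain ⟨e0, e3, e4⟩ := expm_mulVec_sub_mem_cwhDriftSubspace ω t h3 h4
  simp only [Pi.sub_apply, sub_eq_zero] at e0 e3 e4
  exact ⟨⟨e0 ▸ hρx, e3.trans h3, by rw [e4, e0, h4]⟩, e0⟩

/-- **Positive invariance of the safe circularized-orbit set.**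
The set `X_inv = {x : |δx| ≥ ρ, δẋ = 0, δẏ = −(3/2) ω δx}` is positively invariant under
the uncontrolled CWH flow, and the radial coordinate is constant along the flow. -/
theorem safe_circular_orbits_positively_invariant (ω : ℝ) (hω : 0 < ω) (ρ : ℝ) (hρ : 0 < ρ) :
    ∀ x : Fin 6 → ℝ,
      x ∈ {x : Fin 6 → ℝ | ρ ≤ |x 0| ∧ x 3 = 0 ∧ x 4 = -(3 / 2) * ω * x 0} →
      ∀ t : ℝ, 0 ≤ t →
        (expm ω t).mulVec x ∈
          {x : Fin 6 → ℝ | ρ ≤ |x 0| ∧ x 3 = 0 ∧ x 4 = -(3 / 2) * ω * x 0} ∧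
        ((expm ω t).mulVec x) 0 = x 0 :=
  safe_circular_orbits_positively_invariant_general ω ρ

end
end
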